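/- arXiv:1211.2660 — 4 statements merged into one kernel-verified Lean document; each statement's English description precedes it below -/
import Mathlib

section
/- Let ρ be a real (n−2)×(n−2) matrix with symmetric part S = (ρ+ρᵀ)/2, and let α ≠ 0 be a real number. If ρ satisfies the optical constraint ρρᵀ = αS, then the matrix I − (2/α)ρ is orthogonal, and consequently ρ is normal: ρρᵀ = ρᵀρ. -/
open Matrix

/-- The optical constraint ρρᵀ = αS makes I − (2/α)ρ orthogonal, hence ρ is normal. -/
theorem stmt8 {n : ℕ} (ρ : Matrix (Fin n) (Fin n) ℝ) (α : ℝ) (hα : α ≠ 0)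
    (hOC : ρ * ρᵀ = α • (((1 : ℝ) / 2) • (ρ + ρᵀ))) :
    ((1 - (2 / α) • ρ) * (1 - (2 / α) • ρ)ᵀ = 1 ∧
      (1 - (2 / α) • ρ)ᵀ * (1 - (2 / α) • ρ) = 1) ∧
    ρ * ρᵀ = ρᵀ * ρ := by
  have e : (1 - (2 / α) • ρ)ᵀ = 1 - (2 / α) • ρᵀ := by simp
  have h1 : (1 - (2 / α) • ρ) * (1 - (2 / α) • ρ)ᵀ = 1 := by
    rw [e]
    simp only [Matrix.sub_mul, Matrix.mul_sub, Matrix.mul_one, Matrix.one_mul,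
      Matrix.smul_mul, Matrix.mul_smul]
    rw [hOC]
    set_option linter.unnecessarySeqFocus false in
    match_scalars <;> field_simp <;> ring
  have h2 : (1 - (2 / α) • ρ)ᵀ * (1 - (2 / α) • ρ) = 1 := mul_eq_one_comm.mp h1
  refine ⟨⟨h1, h2⟩, ?_⟩
  have h3 := h1.trans h2.symm
  rw [e] at h3
  simp only [Matrix.sub_mul, Matrix.mul_sub, Matrix.mul_one, Matrix.one_mul,
    Matrix.smul_mul, Matrix.mul_smul] at h3
  have h4 : ((2 / α) * (2 / α)) • (ρ * ρᵀ) = ((2 / α) * (2 / α)) • (ρᵀ * ρ) := by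
    linear_combination (norm := module) h3
  have hc : (2 / α) * (2 / α) ≠ 0 := by positivity
  exact smul_right_injective _ hc h4
end

section
/- Let b, b₁, …, b_m be real numbers with m ≥ 1. If 2/(r−b) = ∑_{p=1}^m 1/(r−b_p) for all r in some nonempty open interval avoiding all of these numbers, then m = 2 and b₁ = b₂ = b. -/
/-!
With `F = ∏ₚ (X - bₚ)` one has `∑ₚ 1/(r - bₚ) = F'(r)/F(r)` away from the roots, so the
hypothesis becomes the polynomial identity `2F = (X - b)F'`, valid at infinitely many points and
hence identically. After the shift `X ↦ X + b` it is the Euler equation `2G = XG'`, whose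
solutions are the multiples of `X²`; so `F = c(X - b)²` and comparing roots gives
`{b₁, …, bₘ} = {b, b}`.
-/

open Polynomial

namespace Polynomial

variable {R : Type*} [CommRing R]

theorem coeff_X_mul_derivative (G : R[X]) (k : ℕ) :
    (X * derivative G).coeff k = G.coeff k * k := by
  cases k with
  | zero => simp
  | succ j => rw [coeff_X_mul, coeff_derivative]; push_cast; rfl

variable [IsDomain R] [CharZero R]

theorem eq_C_mul_X_pow_of_C_mul_eq_X_mul_derivative {G : R[X]} {n : ℕ}
    (h : C (n : R) * G = X * derivative G) : G = C (G.coeff n) * X ^ n := by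
  ext k
  rw [coeff_C_mul_X_pow]
  split_ifs with hk
  · rw [hk]
  · have hcoeff := congrArg (coeff · k) h
    simp only [coeff_C_mul, coeff_X_mul_derivative] at hcoeff
    have hprod : ((n : R) - k) * G.coeff k = 0 := by linear_combination hcoeff
    exact (mul_eq_zero.1 hprod).resolve_left (sub_ne_zero.2 (Nat.cast_injective.ne (Ne.symm hk)))

theorem exists_eq_C_mul_X_sub_C_pow_of_C_mul_eq_mul_derivative {F : R[X]} {n : ℕ} {b : R}
    (h : C (n : R) * F = (X - C b) * derivative F) : ∃ a, F = C a * (X - C b) ^ n := by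
  set G := F.comp (X + C b) with hG
  have hGeq : C (n : R) * G = X * derivative G := by
    have hcomp := congrArg (·.comp (X + C b)) h
    simpa [hG, derivative_comp, mul_comp] using hcomp
  have hF : F = G.comp (X - C b) := by simp [hG, comp_assoc]
  refine ⟨G.coeff n, ?_⟩
  rw [hF, eq_C_mul_X_pow_of_C_mul_eq_X_mul_derivative hGeq]
  simp [mul_comp]

theorem eq_replicate_of_C_mul_prod_eq_mul_derivative {B : Multiset R} {n : ℕ} {b : R}
    (h : C (n : R) * (B.map fun z => X - C z).prod =
      (X - C b) * derivative (B.map fun z => X - C z).prod) :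
    B = Multiset.replicate n b := by
  obtain ⟨a, ha⟩ := exists_eq_C_mul_X_sub_C_pow_of_C_mul_eq_mul_derivative h
  have ha0 : a ≠ 0 := by
    rintro rfl
    exact (monic_multisetProd_X_sub_C B).ne_zero (by simpa using ha)
  simpa [roots_C_mul _ ha0, Multiset.nsmul_singleton] using congrArg roots ha

end Polynomial

theorem Multiset.eq_replicate_of_div_sub_eq_sum_one_div_sub {K : Type*} [Field K] [CharZero K]
    {B : Multiset K} {n : ℕ} {b : K} {S : Set K} (hS : S.Infinite)
    (h : ∀ r ∈ S, r ≠ b → r ∉ B →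
      (n : K) / (r - b) = (B.map fun z => 1 / (r - z)).sum) :
    B = replicate n b := by
  classical
  apply eq_replicate_of_C_mul_prod_eq_mul_derivative
  set F := (B.map fun z => X - C z).prod
  have hF : F.Splits := Splits.multisetProd (by simp [Splits.X_sub_C])
  have hroots : F.roots = B := roots_multiset_prod_X_sub_C B
  refine eq_of_infinite_eval_eq _ _ ((hS.sdiff (B.toFinset.finite_toSet.insert b)).mono ?_)
  rintro r ⟨hrS, hr⟩
  simp only [Set.mem_insert_iff, Finset.mem_coe, Multiset.mem_toFinset, not_or] at hr
  have hFr : F.eval r ≠ 0 := by simpa [F, eval_multiset_prod, sub_eq_zero] using hr.2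
  have hrb : r - b ≠ 0 := sub_ne_zero.2 hr.1
  simp only [Set.mem_ofPred_eq, eval_mul, eval_C, eval_sub, eval_X,
    hF.eval_derivative_eq_eval_mul_sum hFr, hroots, ← h r hrS hr.1 hr.2]
  field_simp

theorem stmt14_general {m : ℕ} (b : ℝ) (bp : Fin m → ℝ) (s t : ℝ) (hst : s < t)
    (h : ∀ r ∈ Set.Ioo s t, r ≠ b → (∀ p, r ≠ bp p) →
      2 / (r - b) = ∑ p, 1 / (r - bp p)) :
    m = 2 ∧ ∀ p, bp p = b := by
  have hB : Finset.univ.val.map bp = Multiset.replicate 2 b := by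
    refine Multiset.eq_replicate_of_div_sub_eq_sum_one_div_sub (Set.Ioo_infinite hst)
      fun r hr hrb hrB => ?_
    simp only [Multiset.mem_map, Finset.mem_val, Finset.mem_univ, true_and, not_exists] at hrB
    rw [Multiset.map_map, ← Finset.sum_eq_multiset_sum, Nat.cast_ofNat]
    exact h r hr hrb fun p hp => hrB p hp.symm
  refine ⟨by simpa using congrArg Multiset.card hB, fun p => ?_⟩
  refine Multiset.eq_of_mem_replicate (n := 2) ?_
  exact hB ▸ Multiset.mem_map_of_mem bp (Finset.mem_univ p)

/-- If 2/(r−b) = ∑ₚ 1/(r−bₚ) on a nonempty open interval (away from the poles), then m = 2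
and b₁ = b₂ = b. -/
theorem stmt14 {m : ℕ} (hm : 1 ≤ m) (b : ℝ) (bp : Fin m → ℝ) (s t : ℝ) (hst : s < t)
    (h : ∀ r ∈ Set.Ioo s t, r ≠ b → (∀ p, r ≠ bp p) →
      2 / (r - b) = ∑ p, 1 / (r - bp p)) :
    m = 2 ∧ ∀ p, bp p = b :=
  stmt14_general b bp s t hst h
end

section
/- Let N ≥ 2, let b₁,…,b_N be real numbers that are not all equal, and suppose at least one value, say b₁, is repeated with multiplicity α₁ satisfying 1 < α₁ < N. Let A(r) = A⁰ ∏_k (r−b_k)^{−1} with A⁰ ∈ ℝ, and suppose that for some index i with b_i ≠ b₁ there exist constants W⁰_{ij} such that −2A(r) = ∑_{j≠i} (r−b_j)^{−1} [ 2∫A(r)dr + W⁰_{ij} ] holds identically in r on an interval avoiding all b_k (for some choice of antiderivative of A). Then A⁰ = 0. -/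
/-!
Let μ = ∏_{j ≠ i} (X - b_j) and G = 2F. Multiplying the identity by μ gives
μ' G + P = -2A⁰/(r - b_i) with P = ∑_{j ≠ i} W⁰_j ∏_{k ≠ i, j} (X - b_k), hence
φ = μ G satisfies φ' = -P and φ (X - b_i) μ' = μ (-2A⁰ - (X - b_i) P).
Since β occurs α ≥ 2 times among the b_j (j ≠ i), P(β) = 0, μ = (X - β)^α ν and
μ' = (X - β)^(α-1) w with ν(β), w(β) ≠ 0. After cancelling (X - β)^(α-1),
φ = (X - β) v / q with v(β) = -2A⁰ ν(β) and q(β) ≠ 0, so φ'(β) = v(β)/q(β) must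
vanish; this is the paper's comparison of the pole orders α and α - 1 at β. The quotient
rule for φ turns into a polynomial identity, valid on all of ℝ because it holds on an
interval.
-/

open Polynomial Lagrange Finset Set

theorem Lagrange.eval_nodal_mul_sum_inv_mul {ι K : Type*} [Field K] [DecidableEq ι]
    {s : Finset ι} {v : ι → K} {x : K} (hx : ∀ j ∈ s, x ≠ v j) (c : ι → K) :
    eval x (nodal s v) * ∑ j ∈ s, (x - v j)⁻¹ * c j =
      ∑ j ∈ s, c j * eval x (nodal (s.erase j) v) := by
  rw [mul_sum]
  refine sum_congr rfl fun j hj => ?_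
  have hxj : x - v j ≠ 0 := sub_ne_zero.2 (hx j hj)
  rw [nodal_eq_mul_nodal_erase hj, eval_mul, eval_sub, eval_X, eval_C]
  field_simp

theorem Lagrange.nodal_eq_X_sub_C_pow_mul {ι R : Type*} [CommRing R] (s : Finset ι) (v : ι → R)
    (β : R) [DecidablePred (v · = β)] :
    nodal s v = (X - C β) ^ #{j ∈ s | v j = β} * nodal {j ∈ s | v j ≠ β} v := by
  rw [nodal, ← prod_filter_mul_prod_filter_not s (v · = β), nodal, ← prod_const]
  congr 1
  exact prod_congr rfl fun j hj => by rw [(mem_filter.1 hj).2]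

theorem Polynomial.derivative_X_sub_C_pow_succ_mul {R : Type*} [CommRing R] (β : R) (n : ℕ)
    (p : R[X]) :
    derivative ((X - C β) ^ (n + 1) * p) =
      (X - C β) ^ n * (C ((n : R) + 1) * p + (X - C β) * derivative p) := by
  rw [derivative_mul, derivative_X_sub_C_pow, Nat.add_sub_cancel]
  push_cast
  ring

theorem Polynomial.mul_sq_eq_of_hasDerivAt {s t : ℝ} (hst : s < t) {φ : ℝ → ℝ} {D p q : ℝ[X]}
    (hφ : ∀ r ∈ Ioo s t, HasDerivAt φ (D.eval r) r)
    (hφq : ∀ r ∈ Ioo s t, φ r * q.eval r = p.eval r) :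
    D * q ^ 2 = derivative p * q - p * derivative q := by
  refine eq_of_infinite_eval_eq _ _ ((Ioo_infinite hst).mono fun r hr => ?_)
  have hp :
      HasDerivAt (fun x => p.eval x) (D.eval r * q.eval r + φ r * (derivative q).eval r) r :=
    ((hφ r hr).mul (q.hasDerivAt r)).congr_of_eventuallyEq <| by
      filter_upwards [isOpen_Ioo.mem_nhds hr] with x hx using (hφq x hx).symm
  have hp' := hp.unique (p.hasDerivAt r)
  simp only [mem_ofPred_eq, eval_mul, eval_sub, eval_pow, ← hp', ← hφq r hr]
  ring

theorem Polynomial.eval_eq_zero_of_hasDerivAt_of_mul_eq {s t β : ℝ} (hst : s < t)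
    (hβ : β ∉ Ioo s t) {φ : ℝ → ℝ} {D q v : ℝ[X]} {n : ℕ}
    (hφ : ∀ r ∈ Ioo s t, HasDerivAt φ (D.eval r) r)
    (hφq : ∀ r ∈ Ioo s t, φ r * eval r ((X - C β) ^ n * q) = eval r ((X - C β) ^ (n + 1) * v))
    (hD : D.eval β = 0) (hq : q.eval β ≠ 0) : v.eval β = 0 := by
  have hφq' : ∀ r ∈ Ioo s t, φ r * q.eval r = eval r ((X - C β) * v) := fun r hr => by
    have hrβ : (r - β) ^ n ≠ 0 := pow_ne_zero _ (sub_ne_zero.2 fun h => hβ (h ▸ hr))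
    apply mul_left_cancel₀ hrβ
    simpa only [eval_mul, eval_pow, eval_sub, eval_X, eval_C, pow_succ, mul_left_comm,
      mul_assoc] using hφq r hr
  have := congrArg (eval β) (mul_sq_eq_of_hasDerivAt hst hφ hφq')
  simp only [eval_mul, eval_sub, eval_pow, derivative_mul, eval_add, hD, derivative_sub,
    derivative_X, derivative_C, eval_X, eval_C, sub_self, eval_one] at this
  simpa [hq] using this

noncomputable def Lagrange.sumNodalErase {ι R : Type*} [CommRing R] [DecidableEq ι]
    (s : Finset ι) (v d : ι → R) : R[X] :=
  ∑ j ∈ s, C (d j) * nodal (s.erase j) v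

theorem Lagrange.eval_sumNodalErase_of_one_lt_card {ι R : Type*} [CommRing R] [DecidableEq ι]
    {s : Finset ι} {v : ι → R} (d : ι → R) {β : R} [DecidablePred (v · = β)]
    (hβ : 1 < #{j ∈ s | v j = β}) : eval β (sumNodalErase s v d) = 0 := by
  rw [sumNodalErase, eval_finsetSum]
  refine sum_eq_zero fun j _ => ?_
  obtain ⟨k, hk⟩ : ({j ∈ s | v j = β}.erase j).Nonempty := by
    rw [← card_pos]; have := pred_card_le_card_erase (s := {j ∈ s | v j = β}) (a := j); omega
  obtain ⟨hkj, hks, rfl⟩ : k ≠ j ∧ k ∈ s ∧ v k = β := by simpa using hk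
  rw [eval_mul, eval_nodal_at_node (mem_erase.2 ⟨hkj, hks⟩), mul_zero]

section ConstraintEquation

variable {ι : Type*} [Fintype ι] [DecidableEq ι] {b : ι → ℝ} {i : ι} {A0 r : ℝ}
  {W0 : ι → ℝ}

theorem prod_sub_eq_sub_mul_eval_nodal_erase (i : ι) :
    ∏ k, (r - b k) = (r - b i) * eval r (nodal (univ.erase i) b) := by
  rw [← eval_nodal, nodal_eq_mul_nodal_erase (mem_univ i), eval_mul, eval_sub, eval_X, eval_C]

theorem eval_derivative_nodal_mul_add_eval_sumNodalErase {c : ℝ} (hr : ∀ k, r ≠ b k)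
    (hid : -2 * (A0 * ∏ k, (r - b k)⁻¹) = ∑ j ∈ univ.erase i, (r - b j)⁻¹ * (c + W0 j)) :
    eval r (derivative (nodal (univ.erase i) b)) * c +
      eval r (sumNodalErase (univ.erase i) b W0) = -2 * A0 * (r - b i)⁻¹ := by
  have hμ : eval r (nodal (univ.erase i) b) ≠ 0 := eval_nodal_not_at_node fun k _ => hr k
  have h := congrArg (eval r (nodal (univ.erase i) b) * ·) hid
  simp only [prod_inv_distrib, prod_sub_eq_sub_mul_eval_nodal_erase i,
    eval_nodal_mul_sum_inv_mul (fun k _ => hr k)] at h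
  simp only [derivative_nodal, sumNodalErase, eval_finsetSum, eval_mul, eval_C, sum_mul,
    ← sum_add_distrib]
  calc _ = ∑ j ∈ univ.erase i, (c + W0 j) * eval r (nodal ((univ.erase i).erase j) b) :=
        sum_congr rfl fun j _ => by ring
    _ = _ := by rw [← h]; field_simp

theorem hasDerivAt_eval_nodal_mul {F : ℝ → ℝ} (hr : ∀ k, r ≠ b k)
    (hF : HasDerivAt F (A0 * ∏ k, (r - b k)⁻¹) r)
    (hid : -2 * (A0 * ∏ k, (r - b k)⁻¹) =
      ∑ j ∈ univ.erase i, (r - b j)⁻¹ * (2 * F r + W0 j)) :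
    HasDerivAt (fun x => eval x (nodal (univ.erase i) b) * (2 * F x))
      (eval r (-sumNodalErase (univ.erase i) b W0)) r := by
  refine (((nodal (univ.erase i) b).hasDerivAt r).mul (hF.const_mul 2)).congr_deriv ?_
  have hμ : eval r (nodal (univ.erase i) b) ≠ 0 := eval_nodal_not_at_node fun k _ => hr k
  have h := eval_derivative_nodal_mul_add_eval_sumNodalErase hr hid
  rw [prod_inv_distrib, prod_sub_eq_sub_mul_eval_nodal_erase i, eval_neg]
  field_simp
  linear_combination h

theorem eval_nodal_mul_mul_eval_eq {F : ℝ → ℝ} (hr : ∀ k, r ≠ b k)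
    (hid : -2 * (A0 * ∏ k, (r - b k)⁻¹) =
      ∑ j ∈ univ.erase i, (r - b j)⁻¹ * (2 * F r + W0 j)) :
    eval r (nodal (univ.erase i) b) * (2 * F r) *
        eval r ((X - C (b i)) * derivative (nodal (univ.erase i) b)) =
      eval r (nodal (univ.erase i) b *
        -(C (2 * A0) + (X - C (b i)) * sumNodalErase (univ.erase i) b W0)) := by
  have hri : r - b i ≠ 0 := sub_ne_zero.2 (hr i)
  have h := eval_derivative_nodal_mul_add_eval_sumNodalErase hr hid
  simp only [eval_mul, eval_neg, eval_add, eval_sub, eval_X, eval_C]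
  field_simp at h
  linear_combination eval r (nodal (univ.erase i) b) * h

end ConstraintEquation

theorem stmt15_general {N : ℕ} (b : Fin N → ℝ) (β : ℝ) (α₁ : ℕ)
    (hmult : (Finset.univ.filter (fun k => b k = β)).card = α₁)
    (hα₁ : 1 < α₁)
    (A0 : ℝ) (i : Fin N) (hi : b i ≠ β)
    (W0 : Fin N → ℝ) (F : ℝ → ℝ) (s t : ℝ) (hst : s < t)
    (havoid : ∀ k, b k ∉ Set.Ioo s t)
    (hF : ∀ r ∈ Set.Ioo s t, HasDerivAt F (A0 * ∏ k, (r - b k)⁻¹) r)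
    (hid : ∀ r ∈ Set.Ioo s t,
      -2 * (A0 * ∏ k, (r - b k)⁻¹) =
        ∑ j ∈ Finset.univ.erase i, (r - b j)⁻¹ * (2 * F r + W0 j)) :
    A0 = 0 := by
  obtain ⟨m, rfl⟩ : ∃ m, α₁ = m + 2 := ⟨α₁ - 2, by omega⟩
  obtain ⟨k, hk⟩ := card_pos.1 (by omega : 0 < #{k | b k = β})
  have hβ : β ∉ Ioo s t := (mem_filter.1 hk).2 ▸ havoid k
  have hr : ∀ r ∈ Ioo s t, ∀ k, r ≠ b k := fun r hr k h => havoid k (h ▸ hr)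
  have hcard : #{j ∈ univ.erase i | b j = β} = m + 2 := by
    rwa [filter_erase, erase_eq_of_notMem (by simpa using hi)]
  have hP : eval β (sumNodalErase (univ.erase i) b W0) = 0 :=
    eval_sumNodalErase_of_one_lt_card _ (by omega)
  set ν := nodal {j ∈ univ.erase i | b j ≠ β} b
  set w := C ((m : ℝ) + 1 + 1) * ν + (X - C β) * derivative ν
  set g := -(C (2 * A0) + (X - C (b i)) * sumNodalErase (univ.erase i) b W0)
  have hμ : nodal (univ.erase i) b = (X - C β) ^ (m + 1 + 1) * ν := by
    rw [nodal_eq_X_sub_C_pow_mul _ _ β, hcard]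
  have hμ' : (X - C (b i)) * derivative (nodal (univ.erase i) b) =
      (X - C β) ^ (m + 1) * ((X - C (b i)) * w) := by
    rw [hμ, derivative_X_sub_C_pow_succ_mul]; push_cast; ring
  have hν : eval β ν ≠ 0 := eval_nodal_not_at_node fun j hj => Ne.symm (mem_filter.1 hj).2
  have key := eval_eq_zero_of_hasDerivAt_of_mul_eq (v := ν * g) hst hβ
    (fun r hr' => hasDerivAt_eval_nodal_mul (hr r hr') (hF r hr') (hid r hr'))
    (fun r hr' => by
      rw [← hμ', ← mul_assoc _ ν g, ← hμ]
      exact eval_nodal_mul_mul_eval_eq (hr r hr') (hid r hr'))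
    (by rw [eval_neg, hP, neg_zero])
    (by simp [w, hν, sub_ne_zero.2 hi.symm]; positivity)
  simpa [g, hP, hν] using key

/-- Pole-comparison argument of section 4.1.3 (eq. constrW2): with a repeated value β of
multiplicity 1 < α₁ < N among the bₖ and an index i with bᵢ ≠ β, the identity
−2A = ∑_{j≠i} (r−bⱼ)⁻¹ (2∫A + W⁰ᵢⱼ) for A = A⁰∏(r−bₖ)⁻¹ forces A⁰ = 0. -/
theorem stmt15 {N : ℕ} (hN : 2 ≤ N) (b : Fin N → ℝ) (β : ℝ) (α₁ : ℕ)
    (hmult : (Finset.univ.filter (fun k => b k = β)).card = α₁)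
    (hα₁ : 1 < α₁) (hα₁' : α₁ < N)
    (A0 : ℝ) (i : Fin N) (hi : b i ≠ β)
    (W0 : Fin N → ℝ) (F : ℝ → ℝ) (s t : ℝ) (hst : s < t)
    (havoid : ∀ k, b k ∉ Set.Ioo s t)
    (hF : ∀ r ∈ Set.Ioo s t, HasDerivAt F (A0 * ∏ k, (r - b k)⁻¹) r)
    (hid : ∀ r ∈ Set.Ioo s t,
      -2 * (A0 * ∏ k, (r - b k)⁻¹) =
        ∑ j ∈ Finset.univ.erase i, (r - b j)⁻¹ * (2 * F r + W0 j)) :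
    A0 = 0 :=
  stmt15_general b β α₁ hmult hα₁ A0 i hi W0 F s t hst havoid hF hid
end

section
/- Let ρ = cI + A be a real N×N matrix with c : I → ℝ differentiable, A a differentiable antisymmetric-matrix-valued function, satisfying the Sachs equation ρ' = −ρ². Then taking symmetric and antisymmetric parts yields c'I = −c²I − A² and A' = −2cA; in particular A(r)² is proportional to the identity for each r where the equations hold, namely A² = −(c'+c²)I. -/
open Matrix

/-- Splitting the Sachs equation ρ' = −ρ² for ρ = cI + A (A antisymmetric) into symmetric and
antisymmetric parts: c'I = −c²I − A², A' = −2cA, hence A² = −(c'+c²)I. -/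
theorem stmt18 {N : ℕ} (I : Set ℝ) (hI : IsOpen I)
    (c c' : ℝ → ℝ) (A A' : ℝ → Matrix (Fin N) (Fin N) ℝ)
    (hanti : ∀ r ∈ I, (A r)ᵀ = -A r)
    (hc : ∀ r ∈ I, HasDerivAt c (c' r) r)
    (hA : ∀ r ∈ I, ∀ i j, HasDerivAt (fun s => A s i j) (A' r i j) r)
    (hSachs : ∀ r ∈ I, ∀ i j,
      HasDerivAt (fun s => (c s • (1 : Matrix (Fin N) (Fin N) ℝ) + A s) i j)
        ((-((c r • (1 : Matrix (Fin N) (Fin N) ℝ) + A r) *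
            (c r • (1 : Matrix (Fin N) (Fin N) ℝ) + A r))) i j) r) :
    ∀ r ∈ I,
      (c' r • (1 : Matrix (Fin N) (Fin N) ℝ) = (-(c r ^ 2)) • 1 - A r * A r) ∧
      A' r = (-2 * c r) • A r ∧
      A r * A r = (-(c' r + c r ^ 2)) • (1 : Matrix (Fin N) (Fin N) ℝ) := by
  intro r hr
  -- entrywise antisymmetry of A and A'
  have hPa : ∀ i j, A r j i = -(A r i j) := by
    intro i j
    have := congrFun (congrFun (hanti r hr) i) j
    simpa [Matrix.transpose_apply] using this
  have hP'a : ∀ i j, A' r j i = -(A' r i j) := by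
    intro i j
    have h1 : HasDerivAt (fun s => A s j i) (A' r j i) r := hA r hr j i
    have h2 : HasDerivAt (fun s => A s j i) (-(A' r i j)) r := by
      refine ((hA r hr i j).neg).congr_of_eventuallyEq ?_
      filter_upwards [hI.mem_nhds hr] with s hs
      have := congrFun (congrFun (hanti s hs) i) j
      simpa [Matrix.transpose_apply] using this
    exact h1.unique h2
  -- derivative uniqueness entrywise
  have hE : ∀ i j, c' r * (1 : Matrix (Fin N) (Fin N) ℝ) i j + A' r i j
      = (-((c r • (1 : Matrix (Fin N) (Fin N) ℝ) + A r) *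
          (c r • (1 : Matrix (Fin N) (Fin N) ℝ) + A r))) i j := by
    intro i j
    have h1 : HasDerivAt (fun s => (c s • (1 : Matrix (Fin N) (Fin N) ℝ) + A s) i j)
        (c' r * (1 : Matrix (Fin N) (Fin N) ℝ) i j + A' r i j) r := by
      have := ((hc r hr).mul_const ((1 : Matrix (Fin N) (Fin N) ℝ) i j)).add (hA r hr i j)
      simpa [Matrix.add_apply, Matrix.smul_apply, smul_eq_mul, Pi.add_def] using this
    exact h1.unique (hSachs r hr i j)
  -- expand the square
  have hexp : ((c r • (1 : Matrix (Fin N) (Fin N) ℝ) + A r) *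
      (c r • (1 : Matrix (Fin N) (Fin N) ℝ) + A r))
      = (c r ^ 2) • (1 : Matrix (Fin N) (Fin N) ℝ) + (2 * c r) • A r + A r * A r := by
    simp only [add_mul, mul_add, smul_mul_assoc, Matrix.mul_smul, mul_smul_comm,
      one_mul, mul_one, smul_smul]
    module
  have hE2 : ∀ i j, c' r * (1 : Matrix (Fin N) (Fin N) ℝ) i j + A' r i j
      = -(c r ^ 2 * (1 : Matrix (Fin N) (Fin N) ℝ) i j + 2 * c r * A r i j
          + (A r * A r) i j) := by
    intro i j
    have := hE i j
    rw [hexp] at this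
    simpa [Matrix.add_apply, Matrix.neg_apply, Matrix.smul_apply, smul_eq_mul] using this
  have hone : ∀ i j, (1 : Matrix (Fin N) (Fin N) ℝ) j i = (1 : Matrix (Fin N) (Fin N) ℝ) i j := by
    intro i j
    simp [Matrix.one_apply, eq_comm]
  have hQ : ∀ i j, (A r * A r) j i = (A r * A r) i j := by
    intro i j
    have : (A r * A r)ᵀ = A r * A r := by
      rw [Matrix.transpose_mul, hanti r hr]
      simp [neg_mul_neg]
    have := congrFun (congrFun this i) j
    simpa [Matrix.transpose_apply] using this
  refine ⟨?_, ?_, ?_⟩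
  · ext i j
    have h1 := hE2 i j
    have h2 := hE2 j i
    rw [hPa i j, hP'a i j, hQ i j, hone i j] at h2
    simp only [Matrix.sub_apply, Matrix.smul_apply, Matrix.neg_apply, smul_eq_mul]
    linarith
  · ext i j
    have h1 := hE2 i j
    have h2 := hE2 j i
    rw [hPa i j, hP'a i j, hQ i j, hone i j] at h2
    simp only [Matrix.smul_apply, smul_eq_mul]
    linarith
  · ext i j
    have h1 := hE2 i j
    have h2 := hE2 j i
    rw [hPa i j, hP'a i j, hQ i j, hone i j] at h2
    simp only [Matrix.smul_apply, smul_eq_mul]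
    linarith
end
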